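/- arXiv:1908.03169 — 10 statements merged into one kernel-verified Lean document; each statement's English description precedes it below -/
import Mathlib

section
/- A finite word of length n over any alphabet contains at most n distinct nonempty palindromic factors. -/
/-!
Induct on the word by appending one letter `a` to `v`. A palindromic factor of `v ++ [a]` that is
not a factor of `v` is a palindromic suffix, and of two distinct palindromic suffixes the shorter
one is a suffix, hence by symmetry a proper prefix, of the longer; so it already occurs in `v`.
Thus each letter creates at most one new palindrome.
-/

namespace List

variable {α : Type*}

def palindromicFactors (w : List α) : Set (List α) :=
  {p | p ≠ [] ∧ p.reverse = p ∧ p <:+: w}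

@[simp]
theorem palindromicFactors_nil : ([] : List α).palindromicFactors = ∅ :=
  Set.eq_empty_of_forall_notMem fun _ ⟨hp, _, h⟩ ↦ hp (infix_nil.mp h)

theorem palindromicFactors_finite (w : List α) : w.palindromicFactors.Finite :=
  (finite_toSet w.sublists).subset fun _ ⟨_, _, h⟩ ↦ mem_sublists.mpr h.sublist

theorem IsSuffix.isPrefix_of_reverse_eq {p q : List α} (h : p <:+ q) (hp : p.reverse = p)
    (hq : q.reverse = q) : p <+: q := by
  simpa only [hp, hq] using reverse_prefix.mpr h

theorem IsPrefix.infix_of_suffix_concat {p q v : List α} {a : α} (hpq : p <+: q) (hne : p ≠ q)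
    (hq : q <:+ v ++ [a]) : p <:+: v := by
  rcases suffix_concat_iff.mp hq with rfl | ⟨t, rfl, ht⟩
  · exact absurd (prefix_nil.mp hpq) hne
  · rcases prefix_concat_iff.mp hpq with h | h
    · exact absurd h hne
    · exact h.isInfix.trans ht.isInfix

theorem infix_of_ne_of_palindromic_suffixes {p q v : List α} {a : α}
    (hp : p.reverse = p) (hq : q.reverse = q) (hpv : p <:+ v ++ [a]) (hqv : q <:+ v ++ [a])
    (hne : p ≠ q) : p <:+: v ∨ q <:+: v := by
  rcases suffix_or_suffix_of_suffix hpv hqv with h | h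
  · exact .inl ((h.isPrefix_of_reverse_eq hp hq).infix_of_suffix_concat hne hqv)
  · exact .inr ((h.isPrefix_of_reverse_eq hq hp).infix_of_suffix_concat hne.symm hpv)

theorem palindromicFactors_concat_diff_subsingleton (v : List α) (a : α) :
    ((v ++ [a]).palindromicFactors \ v.palindromicFactors).Subsingleton := by
  have new_suffix : ∀ p ∈ (v ++ [a]).palindromicFactors \ v.palindromicFactors,
      p.reverse = p ∧ p <:+ v ++ [a] ∧ ¬p <:+: v := by
    rintro p ⟨⟨hp, hpal, hinf⟩, hold⟩
    have hnew : ¬p <:+: v := fun h ↦ hold ⟨hp, hpal, h⟩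
    exact ⟨hpal, (infix_concat_iff.mp hinf).resolve_right hnew, hnew⟩
  intro p hp q hq
  obtain ⟨hpal, hpv, hpnew⟩ := new_suffix p hp
  obtain ⟨hqal, hqv, hqnew⟩ := new_suffix q hq
  by_contra hne
  rcases infix_of_ne_of_palindromic_suffixes hpal hqal hpv hqv hne with h | h
  exacts [hpnew h, hqnew h]

theorem ncard_palindromicFactors_concat_le (v : List α) (a : α) :
    (v ++ [a]).palindromicFactors.ncard ≤ v.palindromicFactors.ncard + 1 := by
  have hnew := palindromicFactors_concat_diff_subsingleton v a
  calc (v ++ [a]).palindromicFactors.ncard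
      ≤ ((v ++ [a]).palindromicFactors \ v.palindromicFactors).ncard
          + v.palindromicFactors.ncard :=
        Set.ncard_le_ncard_sdiff_add_ncard _ _ (palindromicFactors_finite v)
    _ ≤ 1 + v.palindromicFactors.ncard := by
        gcongr
        exact (Set.ncard_le_one hnew.finite).mpr hnew
    _ = v.palindromicFactors.ncard + 1 := Nat.add_comm _ _

end List

/-- A finite word of length `n` over any alphabet contains at most `n`
distinct nonempty palindromic factors. -/
theorem count_palindromic_factors_le {α : Type*} (w : List α) :
    {p : List α | p ≠ [] ∧ p.reverse = p ∧ p <:+: w}.ncard ≤ w.length := by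
  change w.palindromicFactors.ncard ≤ w.length
  induction w using List.reverseRecOn with
  | nil => simp
  | append_singleton v a ih =>
    rw [List.length_append, List.length_singleton]
    exact (List.ncard_palindromicFactors_concat_le v a).trans (Nat.add_le_add_right ih 1)
end

section
/- Let φ ∈ {f,g,h} (as defined below) and u,v ∈ Σ₃*. If φ(u)·0 is a palindromic suffix of φ(v)·0, then u is a palindromic suffix of v. -/
/-- The morphism `f` with f(0)=0, f(1)=01, f(2)=011. -/
def fm : List (Fin 3) → List (Fin 2) :=
  fun w => w.flatMap (fun a => if a = 0 then [0] else if a = 1 then [0,1] else [0,1,1])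

/-- The morphism `g` with g(0)=011, g(1)=0121, g(2)=012121. -/
def gm : List (Fin 3) → List (Fin 3) :=
  fun w => w.flatMap (fun a => if a = 0 then [0,1,1] else if a = 1 then [0,1,2,1] else [0,1,2,1,2,1])

/-- The morphism `h` with h(0)=01, h(1)=02, h(2)=022. -/
def hm : List (Fin 3) → List (Fin 3) :=
  fun w => w.flatMap (fun a => if a = 0 then [0,1] else if a = 1 then [0,2] else [0,2,2])

section Gen
variable {β : Type*} (z : β) (e : Fin 3 → List β)

/-- The morphism with images `0 · e a`. -/
def Cw (w : List (Fin 3)) : List β := w.flatMap (fun a => z :: e a)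

/-- The shifted morphism with images `e a · 0`. -/
def Pw (w : List (Fin 3)) : List β := w.flatMap (fun a => e a ++ [z])

lemma Cw_append_z (w : List (Fin 3)) : Cw z e w ++ [z] = z :: Pw z e w := by
  induction w with
  | nil => rfl
  | cons a w ih => simp [Cw, Pw, List.append_assoc] at ih ⊢; simp [ih]

lemma rev_lemma (hrev : ∀ a, (e a).reverse = e a) (w : List (Fin 3)) :
    (Cw z e w ++ [z]).reverse = Cw z e w.reverse ++ [z] := by
  induction w with
  | nil => rfl
  | cons a w ih =>
    simp [Cw, List.flatMap_append, List.reverse_append, hrev, List.append_assoc] at ih ⊢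
    conv_rhs => rw [← List.singleton_append, ← List.append_assoc, ← ih]
    simp

lemma psi_prefix (hpf : ∀ a b (s t : List β), e a ++ z :: s = e b ++ z :: t → a = b) :
    ∀ x y : List (Fin 3), Pw z e x <+: Pw z e y → x <+: y := by
  intro x
  induction x with
  | nil => intro y _; exact List.nil_prefix
  | cons a x ih =>
    intro y h
    cases y with
    | nil => simp [Pw] at h
    | cons b y =>
      obtain ⟨t, ht⟩ := h
      simp only [Pw, List.flatMap_cons, List.append_assoc, List.singleton_append,
        List.cons_append] at ht
      have hab : a = b := hpf a b _ _ ht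
      subst hab
      have h2 : z :: (Pw z e x ++ t) = z :: Pw z e y := List.append_cancel_left ht
      have h3 : Pw z e x <+: Pw z e y := ⟨t, by injection h2⟩
      exact List.cons_prefix_cons.mpr ⟨rfl, ih y h3⟩

lemma psi_inj (hpf : ∀ a b (s t : List β), e a ++ z :: s = e b ++ z :: t → a = b)
    {x y : List (Fin 3)} (h : Pw z e x = Pw z e y) : x = y := by
  have h1 := psi_prefix z e hpf x y (h ▸ List.prefix_refl _)
  have h2 := psi_prefix z e hpf y x (h ▸ List.prefix_refl _)
  exact h1.eq_of_length (le_antisymm h1.length_le h2.length_le)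

lemma main_gen (hrev : ∀ a, (e a).reverse = e a)
    (hpf : ∀ a b (s t : List β), e a ++ z :: s = e b ++ z :: t → a = b)
    (u v : List (Fin 3))
    (hp : (Cw z e u ++ [z]).reverse = Cw z e u ++ [z])
    (hs : Cw z e u ++ [z] <:+ Cw z e v ++ [z]) :
    u.reverse = u ∧ u <:+ v := by
  have h1 : Cw z e u.reverse ++ [z] = Cw z e u ++ [z] :=
    (rev_lemma z e hrev u).symm.trans hp
  rw [Cw_append_z, Cw_append_z] at h1
  have hpal : u.reverse = u := psi_inj z e hpf (by injection h1)
  refine ⟨hpal, ?_⟩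
  have h2 : (Cw z e u ++ [z]).reverse <+: (Cw z e v ++ [z]).reverse :=
    List.reverse_prefix.mpr hs
  rw [rev_lemma z e hrev, rev_lemma z e hrev, Cw_append_z, Cw_append_z] at h2
  have h3 := psi_prefix z e hpf _ _ (List.cons_prefix_cons.mp h2).2
  rw [← List.reverse_prefix] at *
  simpa using h3

end Gen

def ef : Fin 3 → List (Fin 2) := fun a => if a = 0 then [] else if a = 1 then [1] else [1,1]
def eg : Fin 3 → List (Fin 3) := fun a => if a = 0 then [1,1] else if a = 1 then [1,2,1] else [1,2,1,2,1]
def eh : Fin 3 → List (Fin 3) := fun a => if a = 0 then [1] else if a = 1 then [2] else [2,2]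

lemma fm_eq (w : List (Fin 3)) : fm w = Cw 0 ef w := by
  unfold fm Cw
  congr 1; funext a; fin_cases a <;> rfl

lemma gm_eq (w : List (Fin 3)) : gm w = Cw 0 eg w := by
  unfold gm Cw
  congr 1; funext a; fin_cases a <;> rfl

lemma hm_eq (w : List (Fin 3)) : hm w = Cw 0 eh w := by
  unfold hm Cw
  congr 1; funext a; fin_cases a <;> rfl

lemma ef_pf : ∀ a b (s t : List (Fin 2)), ef a ++ 0 :: s = ef b ++ 0 :: t → a = b := by
  intro a b s t h
  fin_cases a <;> fin_cases b <;> simp_all [ef]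

lemma eg_pf : ∀ a b (s t : List (Fin 3)), eg a ++ 0 :: s = eg b ++ 0 :: t → a = b := by
  intro a b s t h
  fin_cases a <;> fin_cases b <;> simp_all [eg]

lemma eh_pf : ∀ a b (s t : List (Fin 3)), eh a ++ 0 :: s = eh b ++ 0 :: t → a = b := by
  intro a b s t h
  fin_cases a <;> fin_cases b <;> simp_all [eh]

/-- If φ(u)·0 is a palindromic suffix of φ(v)·0 for φ ∈ {f,g,h},
then u is a palindromic suffix of v. -/
theorem palindromic_suffix_preimage (u v : List (Fin 3)) :
    (((fm u ++ [0]).reverse = fm u ++ [0] ∧ (fm u ++ [0]) <:+ (fm v ++ [0])) →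
      (u.reverse = u ∧ u <:+ v)) ∧
    (((gm u ++ [0]).reverse = gm u ++ [0] ∧ (gm u ++ [0]) <:+ (gm v ++ [0])) →
      (u.reverse = u ∧ u <:+ v)) ∧
    (((hm u ++ [0]).reverse = hm u ++ [0] ∧ (hm u ++ [0]) <:+ (hm v ++ [0])) →
      (u.reverse = u ∧ u <:+ v)) := by
  refine ⟨fun ⟨hp, hs⟩ => ?_, fun ⟨hp, hs⟩ => ?_, fun ⟨hp, hs⟩ => ?_⟩
  · rw [fm_eq] at hp hs; rw [fm_eq v] at hs
    exact main_gen 0 ef (by decide) ef_pf u v hp hs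
  · rw [gm_eq] at hp hs; rw [gm_eq v] at hs
    exact main_gen 0 eg (by decide) eg_pf u v hp hs
  · rw [hm_eq] at hp hs; rw [hm_eq v] at hs
    exact main_gen 0 eh (by decide) eh_pf u v hp hs
end

section
/- Let φ ∈ {f,g,h}. If w ∈ Σ₃* is not rich, then φ(w)·0 is not rich. -/
/-- A finite word of length n is rich if it contains exactly n distinct
nonempty palindromic factors. -/
def Rich {α : Type*} (w : List α) : Prop :=
  {p : List α | p ≠ [] ∧ p.reverse = p ∧ p <:+: w}.ncard = w.length

/-!
Adding a letter to a word creates at most one new palindromic factor, namely its longest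
palindromic suffix (a shorter palindromic suffix is also a prefix of it, so it occurred before).
Hence a word is rich iff each of its nonempty prefixes gains a new palindrome.

Each of `f`, `g`, `h` has the form `a ↦ 0 ρ(a)` with `ρ` injective and each `ρ(a)` a palindrome
free of `0`, so `φ(w)0 = 0 ρ(w₁) 0 ρ(w₂) 0 ⋯ 0 ρ(wₙ) 0`. A palindromic suffix of `φ(ua)0` starts
with `0`, hence equals `φ(s)0` for a suffix `s` of `ua`, and `s` is a palindrome because the
reversal of `φ(s)0` is `φ(s̃)0`. So the palindrome gained by the prefix `φ(ua)0` yields a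
palindromic suffix `s` of `ua`, which is new since otherwise `φ(s)0` would already occur in `φ(u)`.
-/

open List Function

section Palindromes

variable {α : Type*} {p q v w : List α} {b c : α}

def palFactors (w : List α) : Set (List α) := {p | p ≠ [] ∧ p.reverse = p ∧ p <:+: w}

theorem rich_iff_ncard_palFactors : Rich w ↔ (palFactors w).ncard = w.length := Iff.rfl

theorem palFactors_finite (w : List α) : (palFactors w).Finite :=
  (finite_toSet w.sublists).subset fun _ hp => mem_sublists.2 hp.2.2.sublist

theorem palFactors_mono (h : v <:+: w) : palFactors v ⊆ palFactors w :=
  fun _ ⟨hne, hpal, hp⟩ => ⟨hne, hpal, hp.trans h⟩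

theorem palFactors_nil : palFactors ([] : List α) = ∅ :=
  Set.eq_empty_of_forall_notMem fun _ ⟨hne, _, hp⟩ => hne (infix_nil.1 hp)

theorem infix_of_suffix_of_palindrome (hp : p.reverse = p) (hq : (q ++ [c]).reverse = q ++ [c])
    (hsuf : p <:+ q ++ [c]) (hne : p ≠ q ++ [c]) : p <:+: q := by
  have hpre : p <+: q ++ [c] := by simpa only [hp, hq] using hsuf.reverse
  exact ((prefix_concat_iff.1 hpre).resolve_left hne).isInfix

theorem exists_eq_concat_of_mem_palFactors_concat_sdiff
    (hp : p ∈ palFactors (v ++ [b]) \ palFactors v) : ∃ t, p = t ++ [b] ∧ t <:+ v := by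
  obtain ⟨⟨hne, hpal, hinf⟩, hnew⟩ := hp
  rcases infix_concat_iff.1 hinf with hsuf | hinf
  · exact (suffix_concat_iff.1 hsuf).resolve_left hne
  · exact absurd ⟨hne, hpal, hinf⟩ hnew

theorem palFactors_concat_sdiff_subsingleton (v : List α) (b : α) :
    (palFactors (v ++ [b]) \ palFactors v).Subsingleton := by
  have hsuf {p} (hp : p ∈ palFactors (v ++ [b]) \ palFactors v) : p <:+ v ++ [b] := by
    obtain ⟨t, rfl, ht⟩ := exists_eq_concat_of_mem_palFactors_concat_sdiff hp
    exact suffix_concat_iff.2 (Or.inr ⟨t, rfl, ht⟩)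
  have hle {p q} (hp : p ∈ palFactors (v ++ [b]) \ palFactors v)
      (hq : q ∈ palFactors (v ++ [b]) \ palFactors v) (hpq : p <:+ q) : p = q := by
    obtain ⟨t, rfl, ht⟩ := exists_eq_concat_of_mem_palFactors_concat_sdiff hq
    by_contra hne
    exact hp.2 ⟨hp.1.1, hp.1.2.1,
      (infix_of_suffix_of_palindrome hp.1.2.1 hq.1.2.1 hpq hne).trans ht.isInfix⟩
  intro p hp q hq
  rcases suffix_or_suffix_of_suffix (hsuf hp) (hsuf hq) with hpq | hqp
  · exact hle hp hq hpq
  · exact (hle hq hp hqp).symm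

theorem ncard_palFactors_concat_le (v : List α) (b : α) :
    (palFactors (v ++ [b])).ncard ≤ (palFactors v).ncard + 1 := by
  have hnew : (palFactors (v ++ [b]) \ palFactors v).ncard ≤ 1 :=
    (Set.ncard_le_one ((palFactors_finite _).sdiff)).2 (palFactors_concat_sdiff_subsingleton v b)
  have := Set.ncard_le_ncard_sdiff_add_ncard (palFactors (v ++ [b])) (palFactors v)
    (palFactors_finite v)
  omega

theorem ncard_palFactors_append_le (v t : List α) :
    (palFactors (v ++ t)).ncard ≤ (palFactors v).ncard + t.length := by
  induction t using reverseRecOn with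
  | nil => simp
  | append_singleton t c ih =>
    have := ncard_palFactors_concat_le (v ++ t) c
    rw [← append_assoc, length_append, length_singleton]
    omega

theorem ncard_palFactors_le_length (w : List α) : (palFactors w).ncard ≤ w.length := by
  simpa [palFactors_nil] using ncard_palFactors_append_le [] w

theorem rich_iff_forall_concat_prefix :
    Rich w ↔ ∀ u a, u ++ [a] <+: w → (palFactors (u ++ [a]) \ palFactors u).Nonempty := by
  rw [rich_iff_ncard_palFactors]
  constructor
  · rintro hrich u a ⟨t, rfl⟩
    by_contra hnone
    have hsub : palFactors (u ++ [a]) ⊆ palFactors u :=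
      Set.sdiff_eq_empty.1 (Set.not_nonempty_iff_eq_empty.1 hnone)
    have h₁ := Set.ncard_le_ncard hsub (palFactors_finite u)
    have h₂ := ncard_palFactors_append_le (u ++ [a]) t
    have h₃ := ncard_palFactors_le_length u
    simp only [hrich, length_append, length_singleton] at h₂
    omega
  · refine fun hnew => le_antisymm (ncard_palFactors_le_length w) ?_
    induction w using reverseRecOn with
    | nil => simp
    | append_singleton u a ih =>
      have hlt : (palFactors u).ncard < (palFactors (u ++ [a])).ncard := by
        refine Set.ncard_lt_ncard ?_ (palFactors_finite _)
        refine Set.ssubset_iff_subset_ne.2 ⟨palFactors_mono (prefix_append u [a]).isInfix, ?_⟩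
        intro heq
        simpa [heq] using hnew u a prefix_rfl
      have := ih fun u' a' h => hnew u' a' (h.trans (prefix_append u [a]))
      rw [length_append, length_singleton]
      omega

end Palindromes

theorem List.cons_suffix_of_cons_suffix_append {α : Type*} {a : α} {q r l : List α} (ha : a ∉ r)
    (h : a :: q <:+ r ++ l) : a :: q <:+ l := by
  induction r with
  | nil => simpa using h
  | cons b r ih =>
    rcases suffix_cons_iff.1 h with h | h
    · exact absurd (mem_cons.2 (Or.inl (cons_eq_cons.1 h).1)) ha
    · exact ih (fun h' => ha (mem_cons_of_mem b h')) h

theorem List.append_cons_inj_of_notMem_left {α : Type*} {a : α} {x₁ x₂ y₁ y₂ : List α}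
    (h₁ : a ∉ x₁) (h₂ : a ∉ x₂) (h : x₁ ++ a :: y₁ = x₂ ++ a :: y₂) : x₁ = x₂ ∧ y₁ = y₂ := by
  induction x₁ generalizing x₂ with
  | nil =>
    cases x₂ with
    | nil => simpa using h
    | cons c x₂ =>
      rw [nil_append, cons_append, cons.injEq] at h
      exact absurd (h.1 ▸ mem_cons_self) h₂
  | cons b x₁ ih =>
    cases x₂ with
    | nil =>
      rw [nil_append, cons_append, cons.injEq] at h
      exact absurd (h.1 ▸ mem_cons_self) h₁
    | cons c x₂ =>
      rw [cons_append, cons_append, cons.injEq] at h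
      obtain ⟨rfl, h⟩ := h
      obtain ⟨rfl, rfl⟩ := ih (not_mem_of_not_mem_cons h₁) (not_mem_of_not_mem_cons h₂) h
      exact ⟨rfl, rfl⟩

section MarkedImage

variable {α β : Type*} (z : β) (ρ : α → List β) {s u w x y : List α} {a : α}

/-- `z ρ(w₁) z ρ(w₂) z ⋯ z ρ(wₙ) z`, i.e. `φ(w) z` for the morphism `φ(a) = z ρ(a)`. -/
def markedImage (w : List α) : List β := z :: w.flatMap (ρ · ++ [z])

@[simp] theorem markedImage_ne_nil : markedImage z ρ w ≠ [] := cons_ne_nil _ _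

@[simp] theorem markedImage_nil : markedImage z ρ [] = [z] := rfl

theorem markedImage_cons : markedImage z ρ (a :: w) = z :: (ρ a ++ markedImage z ρ w) := by
  simp [markedImage]

theorem markedImage_append_left :
    markedImage z ρ (x ++ y) = markedImage z ρ x ++ y.flatMap (ρ · ++ [z]) := by
  simp [markedImage]

theorem markedImage_concat : markedImage z ρ (w ++ [a]) = markedImage z ρ w ++ ρ a ++ [z] := by
  simp [markedImage_append_left]

theorem markedImage_eq_flatMap : markedImage z ρ w = w.flatMap (z :: ρ ·) ++ [z] := by
  induction w with
  | nil => rfl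
  | cons a w ih => simp [markedImage_cons, ih]

theorem markedImage_append :
    markedImage z ρ (x ++ y) = x.flatMap (z :: ρ ·) ++ markedImage z ρ y := by
  simp [markedImage_eq_flatMap]

variable {z ρ}

theorem markedImage_prefix_markedImage (h : s <+: u) :
    markedImage z ρ s <+: markedImage z ρ u := by
  obtain ⟨t, rfl⟩ := h
  exact ⟨_, (markedImage_append_left z ρ).symm⟩

theorem markedImage_infix_markedImage (h : s <:+: u) :
    markedImage z ρ s <:+: markedImage z ρ u := by
  obtain ⟨x, y, rfl⟩ := h
  rw [append_assoc, markedImage_append, markedImage_append_left, ← append_assoc]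
  exact infix_append _ _ _

theorem reverse_markedImage (hpal : ∀ a, (ρ a).reverse = ρ a) (w : List α) :
    (markedImage z ρ w).reverse = markedImage z ρ w.reverse := by
  induction w with
  | nil => rfl
  | cons a w ih => simp [markedImage_cons, markedImage_concat, ih, hpal]

theorem markedImage_injective (hz : ∀ a, z ∉ ρ a) (hρ : Injective ρ) :
    Injective (markedImage z ρ) := by
  intro s
  induction s with
  | nil => rintro (_ | ⟨b, t⟩) h <;> simp_all [markedImage_cons]
  | cons a s ih =>
    rintro (_ | ⟨b, t⟩) h
    · simp [markedImage_cons] at h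
    · rw [markedImage_cons, markedImage_cons, cons_inj_right] at h
      obtain ⟨hab, hst⟩ := append_cons_inj_of_notMem_left (hz a) (hz b) h
      rw [hρ hab, ih (congrArg (z :: ·) hst)]

theorem exists_suffix_eq_markedImage (hz : ∀ a, z ∉ ρ a) {q : List β}
    (h : z :: q <:+ markedImage z ρ u) : ∃ s, s <:+ u ∧ z :: q = markedImage z ρ s := by
  induction u with
  | nil =>
    refine ⟨[], suffix_rfl, ?_⟩
    simpa [suffix_cons_iff] using h
  | cons a u ih =>
    rw [markedImage_cons] at h
    rcases suffix_cons_iff.1 h with h | h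
    · exact ⟨a :: u, suffix_rfl, h.trans (markedImage_cons z ρ).symm⟩
    · obtain ⟨s, hs, heq⟩ := ih (cons_suffix_of_cons_suffix_append (hz a) h)
      exact ⟨s, hs.trans (suffix_cons a u), heq⟩

theorem rich_of_rich_markedImage (hpal : ∀ a, (ρ a).reverse = ρ a) (hz : ∀ a, z ∉ ρ a)
    (hρ : Injective ρ) {w : List α} (h : Rich (markedImage z ρ w)) : Rich w := by
  rw [rich_iff_forall_concat_prefix] at h ⊢
  intro u a hua
  have himage : markedImage z ρ u ++ ρ a ++ [z] <+: markedImage z ρ w := by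
    simpa only [markedImage_concat] using markedImage_prefix_markedImage hua
  obtain ⟨q, hq⟩ := h _ z himage
  obtain ⟨t, rfl, ht⟩ := exists_eq_concat_of_mem_palFactors_concat_sdiff hq
  obtain ⟨⟨-, hqpal, -⟩, hqnew⟩ := hq
  have hq_cons : t ++ [z] = z :: t.reverse := hqpal.symm.trans (by simp)
  have hq_suffix : z :: t.reverse <:+ markedImage z ρ (u ++ [a]) := by
    rw [markedImage_concat, ← hq_cons]
    exact suffix_concat_iff.2 (Or.inr ⟨t, rfl, ht⟩)
  obtain ⟨s, hsu, hs⟩ := exists_suffix_eq_markedImage hz hq_suffix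
  rw [← hq_cons] at hs
  have hs_ne : s ≠ [] := by
    rintro rfl
    refine hqnew ⟨by simp, hqpal, ?_⟩
    rw [hs, markedImage_nil]
    exact IsPrefix.isInfix ⟨_, rfl⟩
  have hs_pal : s.reverse = s := by
    refine markedImage_injective hz hρ ?_
    rw [← reverse_markedImage hpal, ← hs, hqpal]
  have hs_new : s ∉ palFactors u := by
    rintro ⟨-, -, hs_old⟩
    refine hqnew ⟨by simp, hqpal, ?_⟩
    rw [hs]
    exact (markedImage_infix_markedImage hs_old).trans (prefix_append _ _).isInfix
  exact ⟨s, ⟨hs_ne, hs_pal, hsu.isInfix⟩, hs_new⟩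

theorem not_rich_flatMap_append {φ : α → List β} (hφ : ∀ a, φ a = z :: ρ a)
    (hpal : ∀ a, (ρ a).reverse = ρ a) (hz : ∀ a, z ∉ ρ a) (hρ : Injective ρ) {w : List α}
    (hw : ¬ Rich w) : ¬ Rich (w.flatMap φ ++ [z]) := by
  rw [show φ = (z :: ρ ·) from funext hφ, ← markedImage_eq_flatMap]
  exact mt (rich_of_rich_markedImage hpal hz hρ) hw

end MarkedImage

/-- For φ ∈ {f,g,h}: if w is not rich, then φ(w)·0 is not rich. -/
theorem non_rich_image (w : List (Fin 3)) (hw : ¬ Rich w) :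
    ¬ Rich (fm w ++ [0]) ∧ ¬ Rich (gm w ++ [0]) ∧ ¬ Rich (hm w ++ [0]) :=
  ⟨not_rich_flatMap_append (ρ := ![[], [1], [1, 1]])
      (by decide) (by decide) (by decide) (by decide) hw,
    not_rich_flatMap_append (ρ := ![[1, 1], [1, 2, 1], [1, 2, 1, 2, 1]])
      (by decide) (by decide) (by decide) (by decide) hw,
    not_rich_flatMap_append (ρ := ![[1], [2], [2, 2]])
      (by decide) (by decide) (by decide) (by decide) hw⟩
end

section
/- If w is an infinite binary word avoiding the cube 111 (i.e., 111 is not a factor of w), then some suffix of w can be written as f(u) for some infinite word u over {0,1,2}, where f(0)=0, f(1)=01, f(2)=011. -/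
/-- `l` is a (finite) factor of the infinite word `w`. -/
def FactorOf {α : Type*} (l : List α) (w : ℕ → α) : Prop :=
  ∃ i : ℕ, ∀ k : ℕ, (h : k < l.length) → l.get ⟨k, h⟩ = w (i + k)

/-- `y` is the image of the infinite word `u` under the morphism `φ`. -/
def IsImage {α β : Type*} (φ : List α → List β) (u : ℕ → α) (y : ℕ → β) : Prop :=
  ∀ n : ℕ, ∀ k : ℕ, (h : k < (φ (List.ofFn (fun i : Fin n => u i))).length) →
    (φ (List.ofFn (fun i : Fin n => u i))).get ⟨k, h⟩ = y k

lemma fin2_eq_one (a : Fin 2) (h : a ≠ 0) : a = 1 := by fin_cases a <;> simp_all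

section
variable (w : ℕ → Fin 2)

noncomputable def nxt (h : ∀ i, ∃ j, i ≤ j ∧ w j = 0) (i : ℕ) : ℕ := Nat.find (h i)

lemma nxt_ge (h : ∀ i, ∃ j, i ≤ j ∧ w j = 0) (i : ℕ) : i ≤ nxt w h i := (Nat.find_spec (h i)).1
lemma nxt_zero (h : ∀ i, ∃ j, i ≤ j ∧ w j = 0) (i : ℕ) : w (nxt w h i) = 0 := (Nat.find_spec (h i)).2
lemma nxt_min (h : ∀ i, ∃ j, i ≤ j ∧ w j = 0) {i j : ℕ} (hij : i ≤ j) (hj : w j = 0) :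
    nxt w h i ≤ j := Nat.find_min' _ ⟨hij, hj⟩
lemma nxt_one (h : ∀ i, ∃ j, i ≤ j ∧ w j = 0) {i j : ℕ} (hij : i ≤ j) (hj : j < nxt w h i) :
    w j = 1 := by
  have hm := Nat.find_min (h i) hj
  push_neg at hm
  exact fin2_eq_one _ (hm hij)

noncomputable def pos (h : ∀ i, ∃ j, i ≤ j ∧ w j = 0) : ℕ → ℕ
  | 0 => nxt w h 0
  | n+1 => nxt w h (pos h n + 1)

end


/-- If an infinite binary word avoids the cube 111, then some suffix of it
is the image under f of an infinite word over Σ₃. -/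
theorem suffix_is_f_image (w : ℕ → Fin 2) (hw : ¬ FactorOf [1, 1, 1] w) :
    ∃ (u : ℕ → Fin 3) (m : ℕ), IsImage fm u (fun n => w (n + m)) := by
  -- every window of length 3 contains a 0
  have h3 : ∀ i, ∃ j, i ≤ j ∧ j ≤ i + 2 ∧ w j = 0 := by
    intro i
    by_contra hc
    push_neg at hc
    apply hw
    refine ⟨i, ?_⟩
    intro k hk
    simp only [List.length_cons, List.length_nil] at hk
    have e0 : w i = 1 := fin2_eq_one _ (hc i le_rfl (by omega))
    have e1 : w (i+1) = 1 := fin2_eq_one _ (hc (i+1) (by omega) (by omega))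
    have e2 : w (i+2) = 1 := fin2_eq_one _ (hc (i+2) (by omega) (by omega))
    interval_cases k <;> simp [e0, e1, e2]
  have h1 : ∀ i, ∃ j, i ≤ j ∧ w j = 0 := fun i => by
    obtain ⟨j, hj1, _, hj3⟩ := h3 i; exact ⟨j, hj1, hj3⟩
  set p : ℕ → ℕ := pos w h1 with hp
  have punf : ∀ n, p (n+1) = nxt w h1 (p n + 1) := by
    intro n; simp only [hp]; rfl
  have hzero : ∀ n, w (p n) = 0 := by
    intro n; cases n <;> exact nxt_zero w h1 _
  have hlt : ∀ n, p n < p (n + 1) := by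
    intro n
    have := nxt_ge w h1 (p n + 1)
    rw [punf n]; omega
  have hbound : ∀ n, p (n + 1) ≤ p n + 3 := by
    intro n
    obtain ⟨j, hj1, hj2, hj3⟩ := h3 (p n + 1)
    have := nxt_min w h1 hj1 hj3
    rw [punf n]; omega
  have hone : ∀ n j, p n < j → j < p (n + 1) → w j = 1 := by
    intro n j hj1 hj2
    exact nxt_one w h1 (i := p n + 1) (by omega) (by rw [punf n] at hj2; omega)
  have hmono : ∀ n, p 0 ≤ p n := by
    intro n
    induction n with
    | zero => exact le_rfl
    | succ n ih => exact le_trans ih (le_of_lt (hlt n))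
  -- the preimage word
  have hd : ∀ n, p (n+1) - p n - 1 < 3 := by
    intro n; have := hlt n; have := hbound n; omega
  set u : ℕ → Fin 3 := fun n => ⟨p (n+1) - p n - 1, hd n⟩ with hu
  refine ⟨u, p 0, ?_⟩
  -- block structure
  have hblock : ∀ n, ∃ B : List (Fin 2),
      fm [u n] = B ∧ B.length = p (n+1) - p n ∧
      ∀ k (hk : k < B.length), B[k] = w (p n + k) := by
    intro n
    have hl := hlt n
    have hb := hbound n
    have hz := hzero n
    have h1' : p n + 1 < p (n+1) → w (p n + 1) = 1 := fun h => hone n _ (by omega) h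
    have h2' : p n + 2 < p (n+1) → w (p n + 2) = 1 := fun h => hone n _ (by omega) h
    have : p (n+1) - p n = 1 ∨ p (n+1) - p n = 2 ∨ p (n+1) - p n = 3 := by omega
    rcases this with h | h | h
    · have hu0 : u n = 0 := by simp [hu, Fin.ext_iff, h]
      refine ⟨[0], by simp [fm, hu0], by simp [h], ?_⟩
      intro k hk
      simp at hk
      subst hk
      simpa using hz.symm
    · have hu0 : u n = 1 := by simp [hu, Fin.ext_iff, h]
      refine ⟨[0,1], by simp [fm, hu0], by simp [h], ?_⟩
      intro k hk
      simp at hk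
      interval_cases k
      · simpa using hz.symm
      · simpa using (h1' (by omega)).symm
    · have hu0 : u n = 2 := by simp [hu, Fin.ext_iff, h]
      refine ⟨[0,1,1], by simp [fm, hu0], by simp [h], ?_⟩
      intro k hk
      simp at hk
      interval_cases k
      · simpa using hz.symm
      · simpa using (h1' (by omega)).symm
      · simpa using (h2' (by omega)).symm
  -- key induction
  have key : ∀ n, (fm (List.ofFn (fun i : Fin n => u i))).length = p n - p 0 ∧
      ∀ k (hk : k < (fm (List.ofFn (fun i : Fin n => u i))).length),
        (fm (List.ofFn (fun i : Fin n => u i)))[k] = w (p 0 + k) := by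
    intro n
    induction n with
    | zero => simp [fm]
    | succ n ih =>
      obtain ⟨ihl, ihget⟩ := ih
      obtain ⟨B, hB1, hB2, hB3⟩ := hblock n
      have hsplit : List.ofFn (fun i : Fin (n+1) => u i) =
          List.ofFn (fun i : Fin n => u i) ++ [u n] := by
        rw [List.ofFn_succ']
        simp [List.concat_eq_append]
      have hfm : fm (List.ofFn (fun i : Fin (n+1) => u i)) =
          fm (List.ofFn (fun i : Fin n => u i)) ++ B := by
        rw [hsplit, ← hB1]
        simp [fm]
      rw [hfm]
      constructor
      · rw [List.length_append, ihl, hB2]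
        have := hlt n; have := hmono n; omega
      · intro k hk
        rw [List.length_append] at hk
        by_cases hkl : k < (fm (List.ofFn (fun i : Fin n => u i))).length
        · rw [List.getElem_append_left hkl]
          exact ihget k hkl
        · push_neg at hkl
          rw [List.getElem_append_right hkl]
          rw [hB3 _ (by omega)]
          congr 1
          have := hmono n
          omega
  intro n k hk
  rw [List.get_eq_getElem, (key n).2 k hk]
  simp only [Nat.add_comm]
end

section
/- For every word v ∈ Σ₃*, the word g(v0v0v2) equals (V1V1V2)·121 where V = g(v)·01, and hence g(v1v1v2) contains a cube (since g(1) is a prefix of g(2)). Similarly, h(v0v0v2) equals (V1V1V2)·2 where V = h(v)·0. -/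
/-- `w` contains a cube: a nonempty factor of the form xxx. -/
def ContainsCube {α : Type*} (w : List α) : Prop :=
  ∃ x : List α, x ≠ [] ∧ (x ++ x ++ x) <:+: w

/-- g(v0v0v2) = (V1V1V2)·121 with V = g(v)·01; hence g(v1v1v2) contains a cube;
and h(v0v0v2) = (V'1V'1V'2)·2 with V' = h(v)·0. -/
theorem g_h_identities (v : List (Fin 3)) :
    (gm (v ++ [0] ++ v ++ [0] ++ v ++ [2]) =
      (gm v ++ [0, 1] ++ [1] ++ (gm v ++ [0, 1]) ++ [1] ++ (gm v ++ [0, 1]) ++ [2])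
        ++ [1, 2, 1]) ∧
    ContainsCube (gm (v ++ [1] ++ v ++ [1] ++ v ++ [2])) ∧
    (hm (v ++ [0] ++ v ++ [0] ++ v ++ [2]) =
      (hm v ++ [0] ++ [1] ++ (hm v ++ [0]) ++ [1] ++ (hm v ++ [0]) ++ [2]) ++ [2]) := by
  refine ⟨?_, ?_, ?_⟩
  · simp [gm, List.flatMap_append]
  · refine ⟨gm v ++ [0, 1, 2, 1], by simp, ?_⟩
    refine List.IsPrefix.isInfix ⟨[2, 1], ?_⟩
    simp [gm, List.flatMap_append]
  · simp [hm, List.flatMap_append]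
end

section
/- For every word v ∈ Σ₃*, the words f(v0v0v1) and f(v1v1v2) each contain a cube, where f(0)=0, f(1)=01, f(2)=011. -/
/-- f(v0v0v1) and f(v1v1v2) each contain a cube. -/
theorem f_cubes (v : List (Fin 3)) :
    ContainsCube (fm (v ++ [0] ++ v ++ [0] ++ v ++ [1])) ∧
    ContainsCube (fm (v ++ [1] ++ v ++ [1] ++ v ++ [2])) := by
  constructor
  · exact ⟨fm v ++ [0], by simp, ⟨[], [1], by simp [fm, List.flatMap_append]⟩⟩
  · exact ⟨fm v ++ [0, 1], by simp, ⟨[], [1], by simp [fm, List.flatMap_append]⟩⟩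
end

section
/- Define Δ on finite binary words of length ≥ 1 by Δ(w)_i = (w_i + w_{i+1}) mod 2, so |Δ(w)| = |w| - 1. Define morphisms λ(0)=0, λ(1)=11, λ(2)=101 and μ(0)=01111, μ(1)=01110111, μ(2)=0111011110111 from Σ₃* to Σ₂*. Then for every w ∈ Σ₃*: Δ(f(w)·0) = λ(w) and Δ(f(g(w))·0) = μ(w), where f(0)=0, f(1)=01, f(2)=011 and g(0)=011, g(1)=0121, g(2)=012121. -/
/-- First differences mod 2 of a finite binary word; |Δ(w)| = |w| - 1. -/
def delta (w : List (Fin 2)) : List (Fin 2) :=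
  List.zipWith (· + ·) w w.tail

/-- The morphism λ with λ(0)=0, λ(1)=11, λ(2)=101. -/
def lam : List (Fin 3) → List (Fin 2) :=
  fun w => w.flatMap (fun a => if a = 0 then [0] else if a = 1 then [1,1] else [1,0,1])

/-- The morphism μ with μ(0)=01111, μ(1)=01110111, μ(2)=0111011110111. -/
def mu : List (Fin 3) → List (Fin 2) :=
  fun w => w.flatMap (fun a => if a = 0 then [0,1,1,1,1]
    else if a = 1 then [0,1,1,1,0,1,1,1] else [0,1,1,1,0,1,1,1,1,0,1,1,1])

lemma fm_nil : fm [] = [] := rfl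

lemma fm_cons (a : Fin 3) (w : List (Fin 3)) :
    fm (a :: w) = (if a = 0 then [0] else if a = 1 then [0,1] else [0,1,1]) ++ fm w := by
  simp [fm]

lemma gm_cons (a : Fin 3) (w : List (Fin 3)) :
    gm (a :: w) = (if a = 0 then [0,1,1] else if a = 1 then [0,1,2,1] else [0,1,2,1,2,1]) ++ gm w := by
  simp [gm]

lemma lam_cons (a : Fin 3) (w : List (Fin 3)) :
    lam (a :: w) = (if a = 0 then [0] else if a = 1 then [1,1] else [1,0,1]) ++ lam w := by
  simp [lam]

lemma mu_cons (a : Fin 3) (w : List (Fin 3)) :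
    mu (a :: w) = (if a = 0 then [0,1,1,1,1]
      else if a = 1 then [0,1,1,1,0,1,1,1] else [0,1,1,1,0,1,1,1,1,0,1,1,1]) ++ mu w := by
  simp [mu]

lemma fm_append (x y : List (Fin 3)) : fm (x ++ y) = fm x ++ fm y := by
  simp [fm]

lemma dstep (x y : Fin 2) (l : List (Fin 2)) :
    delta (x :: y :: l) = (x + y) :: delta (y :: l) := rfl

/-- Δ(f(w)·0) = λ(w) and Δ(f(g(w))·0) = μ(w) for every w ∈ Σ₃*. -/
theorem delta_of_images (w : List (Fin 3)) :
    delta (fm w ++ [0]) = lam w ∧ delta (fm (gm w) ++ [0]) = mu w := by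
  have h11 : (1:Fin 2) + 1 = 0 := rfl
  have head0 : ∀ v : List (Fin 3), ∃ t, fm v ++ [0] = 0 :: t := by
    intro v
    cases v with
    | nil => exact ⟨[], rfl⟩
    | cons a v =>
      fin_cases a <;> simp [fm_cons] <;> exact ⟨_, rfl⟩
  induction w with
  | nil => exact ⟨rfl, rfl⟩
  | cons a w ih =>
    obtain ⟨ih1, ih2⟩ := ih
    obtain ⟨t, ht⟩ := head0 w
    obtain ⟨s, hs⟩ := head0 (gm w)
    rw [ht] at ih1
    rw [hs] at ih2
    constructor
    · fin_cases a <;>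
      · simp only [fm_cons, lam_cons, List.append_assoc]
        norm_num
        simp [ht, dstep, h11, ih1]
    · fin_cases a <;>
      · simp only [gm_cons, fm_append, fm_cons, fm_nil, mu_cons, List.append_assoc]
        norm_num
        simp [fm_cons, fm_nil, hs, dstep, h11, ih2]
end

section
/- For every n ≥ 0, λ(hⁿ(0)) = ξⁿ(0), where λ(0)=0, λ(1)=11, λ(2)=101; h(0)=01, h(1)=02, h(2)=022; ξ(0)=011, ξ(1)=01. -/
/-- The Sturmian morphism ξ with ξ(0)=011, ξ(1)=01. -/
def xi : List (Fin 2) → List (Fin 2) :=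
  fun w => w.flatMap (fun a => if a = 0 then [0,1,1] else [0,1])

lemma lam_hm (w : List (Fin 3)) : lam (hm w) = xi (lam w) := by
  induction w with
  | nil => rfl
  | cons a t ih =>
    show lam (hm ([a] ++ t)) = xi (lam ([a] ++ t))
    simp only [lam, hm, xi, List.flatMap_append] at *
    rw [ih]
    congr 1
    fin_cases a <;> rfl

/-- λ(hⁿ(0)) = ξⁿ(0) for every n ≥ 0. -/
theorem lam_iterate_h (n : ℕ) :
    lam (hm^[n] [(0 : Fin 3)]) = xi^[n] [(0 : Fin 2)] := by
  induction n with
  | zero => rfl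
  | succ n ih =>
    rw [Function.iterate_succ_apply', Function.iterate_succ_apply', lam_hm, ih]
end

section
/- Let x = (xₙ)ₙ≥₀ be an infinite binary word and let y = Δ(x) be defined by yₙ = (xₙ + xₙ₊₁) mod 2. Suppose x contains a repetition of the form (x_i x_{i+1} ⋯ x_{i+ℓ-1})^e x_i ⋯ x_{i+t-1} for integers e ≥ 2, ℓ ≥ 1, 1 ≤ t ≤ ℓ (meaning x_{j} = x_{j+ℓ} for i ≤ j ≤ i + (e-1)ℓ + t - 1 - ℓ, i.e., the factor of x of length eℓ+t starting at position i has period ℓ). Then the factor of y of length eℓ+t-1 starting at position i has period ℓ, and the number of 1's in y_i y_{i+1} ⋯ y_{i+ℓ-1} is even. -/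
/-! Each `y j` depends only on `x j` and `x (j + 1)`, so the period of `x` passes to `y` on a window
one shorter. Over `ℤ/2` the sum of `y` across one period telescopes to `x i + x (i + ℓ) = 0`, and that
sum is the parity of the number of 1s. -/

open Fin.CommRing

theorem delta_periodic_of_periodic {M : Type*} [Add M] {x y : ℕ → M}
    (hy : ∀ n, y n = x n + x (n + 1)) {ℓ i N : ℕ}
    (hx : ∀ j, i ≤ j → j + ℓ + 1 ≤ N → x j = x (j + ℓ)) :
    ∀ j, i ≤ j → j + ℓ + 2 ≤ N → y j = y (j + ℓ) := by
  intro j hij hjN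
  rw [hy, hy, hx j hij (by omega), hx (j + 1) (by omega) (by omega), Nat.add_right_comm]

theorem CharTwo.sum_range_add_succ {R : Type*} [Ring R] [CharP R 2] (x : ℕ → R) (n : ℕ) :
    ∑ k ∈ Finset.range n, (x k + x (k + 1)) = x 0 + x n := by
  simpa only [CharTwo.sub_eq_add, add_comm] using Finset.sum_range_sub x n

theorem even_card_filter_eq_one_iff_sum_eq_zero {α : Type*} (s : Finset α) (f : α → Fin 2) :
    Even (s.filter (f · = 1)).card ↔ ∑ a ∈ s, f a = 0 := by
  rw [← ZMod.natCast_eq_zero_iff_even, Finset.natCast_card_filter]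
  refine Eq.congr_left (Finset.sum_congr rfl fun a _ => ?_)
  generalize f a = b
  fin_cases b <;> rfl

theorem delta_of_repetition_general (x : ℕ → Fin 2) (y : ℕ → Fin 2)
    (hy : ∀ n, y n = x n + x (n + 1))
    (e ℓ t i : ℕ) (he : 2 ≤ e) (ht1 : 1 ≤ t)
    (hrep : ∀ j, i ≤ j → j + ℓ + 1 ≤ i + e * ℓ + t → x j = x (j + ℓ)) :
    (∀ j, i ≤ j → j + ℓ + 2 ≤ i + e * ℓ + t → y j = y (j + ℓ)) ∧
    Even ((Finset.range ℓ).filter (fun k => y (i + k) = 1)).card := by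
  refine ⟨delta_periodic_of_periodic hy hrep, ?_⟩
  have hperiod : x i = x (i + ℓ) := hrep i le_rfl (by nlinarith)
  rw [even_card_filter_eq_one_iff_sum_eq_zero]
  simpa only [hy, ← add_assoc, add_zero, hperiod, CharTwo.add_self_eq_zero]
    using CharTwo.sum_range_add_succ (fun k => x (i + k)) ℓ

/-- If the factor of `x` of length eℓ+t starting at position i has period ℓ
(e ≥ 2, ℓ ≥ 1, 1 ≤ t ≤ ℓ), then the factor of y = Δ(x) of length eℓ+t-1
starting at i has period ℓ, and the number of 1's in y_i ⋯ y_{i+ℓ-1} is even. -/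
theorem delta_of_repetition (x : ℕ → Fin 2) (y : ℕ → Fin 2)
    (hy : ∀ n, y n = x n + x (n + 1))
    (e ℓ t i : ℕ) (he : 2 ≤ e) (hℓ : 1 ≤ ℓ) (ht1 : 1 ≤ t) (ht2 : t ≤ ℓ)
    (hrep : ∀ j, i ≤ j → j + ℓ + 1 ≤ i + e * ℓ + t → x j = x (j + ℓ)) :
    (∀ j, i ≤ j → j + ℓ + 2 ≤ i + e * ℓ + t → y j = y (j + ℓ)) ∧
    Even ((Finset.range ℓ).filter (fun k => y (i + k) = 1)).card :=
  delta_of_repetition_general x y hy e ℓ t i he ht1 hrep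
end

section
/- Let (qₖ) satisfy q₁ = 4, q₂ = 9, and qₖ = 2q_{k-1} + q_{k-2} for k ≥ 3, and for k ≥ 2 define Eₖ = 2 + (q_{k-1} − 1)/(q_{k-2} + q_{k-1}) (with q₀ = 1). Then the sequence (Eₖ)_{k≥2} is strictly increasing and converges to 2 + √2/2. -/
open Filter Topology

/-- With q₀ = 1, q₁ = 4, qₖ = 2q_{k-1} + q_{k-2}, and
Eₖ = 2 + (q_{k-1} − 1)/(q_{k-2} + q_{k-1}) for k ≥ 2, the sequence (Eₖ)_{k≥2}
is strictly increasing and converges to 2 + √2/2. -/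
theorem E_increasing_tendsto (q : ℕ → ℝ) (E : ℕ → ℝ)
    (h0 : q 0 = 1) (h1 : q 1 = 4) (hrec : ∀ n, q (n + 2) = 2 * q (n + 1) + q n)
    (hE : ∀ k, 2 ≤ k → E k = 2 + (q (k - 1) - 1) / (q (k - 2) + q (k - 1))) :
    StrictMonoOn E (Set.Ici 2) ∧
      Tendsto E atTop (𝓝 (2 + Real.sqrt 2 / 2)) := by
  set s : ℝ := Real.sqrt 2 with hsdef
  have hs2 : s ^ 2 = 2 := Real.sq_sqrt (by norm_num)
  have hsnn : 0 ≤ s := Real.sqrt_nonneg 2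
  have hs1 : 1 < s := by nlinarith
  have hα0 : (0:ℝ) < 1 + s := by linarith
  have hα0' : (1:ℝ) + s ≠ 0 := ne_of_gt hα0
  -- basic bounds on q
  have hq : ∀ n, 1 ≤ q n ∧ 4 ≤ q (n + 1) := by
    intro n
    induction n with
    | zero => exact ⟨by rw [h0], by rw [h1]⟩
    | succ n ih =>
      refine ⟨by linarith [ih.2], ?_⟩
      rw [hrec]; linarith [ih.1, ih.2]
  -- Pell-type invariant
  have hinv : ∀ n, q (n+1)^2 - 2 * q n * q (n+1) - q n ^ 2 = 7 * (-1:ℝ)^n := by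
    intro n
    induction n with
    | zero => rw [h0, h1]; norm_num
    | succ n ih => rw [hrec]; linear_combination -ih
  -- successive step increase
  have hstep : ∀ m : ℕ, E (m + 2) < E (m + 3) := by
    intro m
    rw [hE (m+2) (by omega), hE (m+3) (by omega)]
    have e1 : m + 2 - 1 = m + 1 := by omega
    have e2 : m + 2 - 2 = m := by omega
    have e3 : m + 3 - 1 = m + 2 := by omega
    have e4 : m + 3 - 2 = m + 1 := by omega
    rw [e1, e2, e3, e4, hrec]
    have ha := (hq m).1
    have hb := (hq m).2
    have hx : ((-1:ℝ))^m ≤ 1 := by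
      rcases Nat.even_or_odd m with h | h
      · rw [h.neg_one_pow]
      · rw [h.neg_one_pow]; norm_num
    have hd1 : 0 < q m + q (m+1) := by linarith
    have hd2 : 0 < q (m+1) + (2 * q (m+1) + q m) := by linarith
    have key : (q (m+1) - 1) / (q m + q (m+1))
        < (2 * q (m+1) + q m - 1) / (q (m+1) + (2 * q (m+1) + q m)) := by
      rw [div_lt_div_iff₀ hd1 hd2]
      nlinarith [hinv m]
    linarith
  have hmono : ∀ m n : ℕ, 2 ≤ m → m < n → E m < E n := by
    intro m n hm hlt
    induction n with
    | zero => omega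
    | succ n ih =>
      have hEstep : ∀ j : ℕ, 2 ≤ j → E j < E (j + 1) := by
        intro j hj
        obtain ⟨i, rfl⟩ : ∃ i, j = i + 2 := ⟨j - 2, by omega⟩
        exact hstep i
      rcases Nat.lt_or_ge m n with h | h
      · exact (ih h).trans (hEstep n (by omega))
      · obtain rfl : m = n := by omega
        exact hEstep _ hm
  constructor
  · intro a ha b hb hab
    exact hmono a b ha hab
  -- closed form
  have hcf : ∀ n, q n = (3*s+2)/4 * (1+s)^n + (2-3*s)/4 * (1-s)^n := by
    have H : ∀ n, q n = (3*s+2)/4 * (1+s)^n + (2-3*s)/4 * (1-s)^n ∧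
        q (n+1) = (3*s+2)/4 * (1+s)^(n+1) + (2-3*s)/4 * (1-s)^(n+1) := by
      intro n
      induction n with
      | zero =>
        constructor
        · rw [h0]; ring
        · rw [h1]; linear_combination (-3/2 : ℝ) * hs2
      | succ n ih =>
        refine ⟨ih.2, ?_⟩
        rw [hrec]
        linear_combination 2 * ih.2 + ih.1 -
          ((3*s+2)/4 * (1+s)^n + (2-3*s)/4 * (1-s)^n) * hs2
    exact fun n => (H n).1
  -- rewrite E (n+2) as a ratio of convergent expressions
  have hformula : ∀ n : ℕ, E (n + 2) = 2 +
      ((3*s+2)/4 + (2-3*s)/4 * ((1-s)/(1+s))^(n+1) - (1/(1+s))^(n+1)) /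
      ((3*s+2)/4 * (1/(1+s)) + (3*s+2)/4
        + (2-3*s)/4 * (1/(1+s)) * ((1-s)/(1+s))^n
        + (2-3*s)/4 * ((1-s)/(1+s))^(n+1)) := by
    intro n
    rw [hE (n+2) (by omega)]
    have e1 : n + 2 - 1 = n + 1 := by omega
    have e2 : n + 2 - 2 = n := by omega
    rw [e1, e2, hcf n, hcf (n+1)]
    have hαne : ((1:ℝ)+s)^(n+1) ≠ 0 := pow_ne_zero _ hα0'
    have hrpow : ((1-s)/(1+s))^(n+1) * (1+s)^(n+1) = (1-s)^(n+1) := by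
      rw [← mul_pow]; rw [div_mul_cancel₀ _ hα0']
    have hspow : ((1:ℝ)/(1+s))^(n+1) * (1+s)^(n+1) = 1 := by
      rw [← mul_pow, one_div, inv_mul_cancel₀ hα0', one_pow]
    have hs' : ((1:ℝ)/(1+s)) * (1+s)^(n+1) = (1+s)^n := by
      have : ((1:ℝ)/(1+s)) * (1+s)^(n+1) = (1+s)^n * ((1/(1+s)) * (1+s)) := by ring
      rw [this, one_div, inv_mul_cancel₀ hα0', mul_one]
    have hc : ((1:ℝ)/(1+s)) * ((1-s)/(1+s))^n * (1+s)^(n+1) = (1-s)^n := by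
      have h' : ((1-s)/(1+s))^n * (1+s)^n = (1-s)^n := by
        rw [← mul_pow, div_mul_cancel₀ _ hα0']
      have : ((1:ℝ)/(1+s)) * ((1-s)/(1+s))^n * (1+s)^(n+1)
          = ((1-s)/(1+s))^n * (1+s)^n * ((1/(1+s)) * (1+s)) := by ring
      rw [this, one_div, inv_mul_cancel₀ hα0', mul_one, h']
    have hnum : (3*s+2)/4 * (1+s)^(n+1) + (2-3*s)/4 * (1-s)^(n+1) - 1
        = ((3*s+2)/4 + (2-3*s)/4 * ((1-s)/(1+s))^(n+1) - (1/(1+s))^(n+1))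
          * (1+s)^(n+1) := by
      linear_combination (-(2-3*s)/4) * hrpow + hspow
    have hden : ((3*s+2)/4 * (1+s)^n + (2-3*s)/4 * (1-s)^n)
        + ((3*s+2)/4 * (1+s)^(n+1) + (2-3*s)/4 * (1-s)^(n+1))
        = ((3*s+2)/4 * (1/(1+s)) + (3*s+2)/4
          + (2-3*s)/4 * (1/(1+s)) * ((1-s)/(1+s))^n
          + (2-3*s)/4 * ((1-s)/(1+s))^(n+1)) * (1+s)^(n+1) := by
      linear_combination (-(3*s+2)/4) * hs' - ((2-3*s)/4) * hc
        - ((2-3*s)/4) * hrpow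
    rw [hnum, hden, mul_div_mul_right _ _ hαne]
  -- limits of the building blocks
  have hrabs : |(1-s)/(1+s)| < 1 := by
    rw [abs_lt]
    constructor
    · rw [neg_lt, ← neg_div, div_lt_iff₀ hα0]; nlinarith
    · rw [div_lt_iff₀ hα0]; nlinarith
  have hsabs : |(1:ℝ)/(1+s)| < 1 := by
    rw [abs_lt]
    constructor
    · rw [neg_lt, ← neg_div, div_lt_iff₀ hα0]; nlinarith
    · rw [div_lt_iff₀ hα0]; nlinarith
  have t1 : Tendsto (fun n : ℕ => ((1-s)/(1+s))^n) atTop (𝓝 0) :=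
    tendsto_pow_atTop_nhds_zero_iff.mpr hrabs
  have t2 : Tendsto (fun n : ℕ => ((1:ℝ)/(1+s))^n) atTop (𝓝 0) :=
    tendsto_pow_atTop_nhds_zero_iff.mpr hsabs
  have t1' : Tendsto (fun n : ℕ => ((1-s)/(1+s))^(n+1)) atTop (𝓝 0) :=
    t1.comp (tendsto_add_atTop_nat 1)
  have t2' : Tendsto (fun n : ℕ => ((1:ℝ)/(1+s))^(n+1)) atTop (𝓝 0) :=
    t2.comp (tendsto_add_atTop_nat 1)
  have tnum : Tendsto (fun n : ℕ =>
      (3*s+2)/4 + (2-3*s)/4 * ((1-s)/(1+s))^(n+1) - (1/(1+s))^(n+1))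
      atTop (𝓝 ((3*s+2)/4)) := by
    have h1 : Tendsto (fun n : ℕ =>
        (3*s+2)/4 + (2-3*s)/4 * ((1-s)/(1+s))^(n+1)) atTop
        (𝓝 ((3*s+2)/4 + (2-3*s)/4 * 0)) :=
      tendsto_const_nhds.add (t1'.const_mul _)
    have h2 := h1.sub t2'
    simpa using h2
  have tden : Tendsto (fun n : ℕ =>
      (3*s+2)/4 * (1/(1+s)) + (3*s+2)/4
        + (2-3*s)/4 * (1/(1+s)) * ((1-s)/(1+s))^n
        + (2-3*s)/4 * ((1-s)/(1+s))^(n+1))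
      atTop (𝓝 ((3*s+2)/4 * (1/(1+s)) + (3*s+2)/4)) := by
    have h1 : Tendsto (fun n : ℕ =>
        ((3*s+2)/4 * (1/(1+s)) + (3*s+2)/4)
          + (2-3*s)/4 * (1/(1+s)) * ((1-s)/(1+s))^n) atTop
        (𝓝 (((3*s+2)/4 * (1/(1+s)) + (3*s+2)/4)
          + (2-3*s)/4 * (1/(1+s)) * 0)) :=
      tendsto_const_nhds.add (t1.const_mul _)
    have h2 := h1.add (t1'.const_mul ((2-3*s)/4))
    simpa using h2
  have hLpos : 0 < (3*s+2)/4 * (1/(1+s)) + (3*s+2)/4 := by positivity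
  have hLne : (3*s+2)/4 * (1/(1+s)) + (3*s+2)/4 ≠ 0 := ne_of_gt hLpos
  have hvalue : (2:ℝ) + ((3*s+2)/4) / ((3*s+2)/4 * (1/(1+s)) + (3*s+2)/4)
      = 2 + s / 2 := by
    have h32 : (3*s+2) ≠ 0 := by positivity
    field_simp
    ring_nf
    nlinarith [hs2]
  have tE : Tendsto (fun n : ℕ => E (n + 2)) atTop (𝓝 (2 + s / 2)) := by
    have T : Tendsto (fun n : ℕ => (2:ℝ) +
        ((3*s+2)/4 + (2-3*s)/4 * ((1-s)/(1+s))^(n+1) - (1/(1+s))^(n+1)) /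
        ((3*s+2)/4 * (1/(1+s)) + (3*s+2)/4
          + (2-3*s)/4 * (1/(1+s)) * ((1-s)/(1+s))^n
          + (2-3*s)/4 * ((1-s)/(1+s))^(n+1)))
        atTop (𝓝 ((2:ℝ) + ((3*s+2)/4) / ((3*s+2)/4 * (1/(1+s)) + (3*s+2)/4))) :=
      tendsto_const_nhds.add (tnum.div tden hLne)
    rw [hvalue] at T
    exact T.congr fun n => (hformula n).symm
  exact (tendsto_add_atTop_iff_nat 2).mp tE
end
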